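/- Consider the two-element algebra A = {0, 1} with the single binary operation of multiplication. Then the whole set A is 𝒜-independent (indeed every subset of A is a subalgebra), but A is not 𝒜-free: the transposition f : A → A swapping 0 and 1 admits no extension f̄ : A → A with f̄(x·y) = f(x)·f(y) for all x, y ∈ A. -/
import Mathlib


/-- A finitary algebraic operation on `A`: a function `A^{S} → A` where the
support `S` is a finite subset of `ω`. -/
structure Op (A : Type*) where
  supp : Finset ℕ
  op : (supp → A) → A

/-- The `𝒜`-hull of a set `B ⊆ A`: `B` together with all values of operations
of `𝒜` on tuples from `B`. -/
def hull {A : Type*} (𝒜 : Set (Op A)) (B : Set A) : Set A :=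
  B ∪ ⋃ α ∈ 𝒜, {a | ∃ x : α.supp → A, (∀ i, x i ∈ B) ∧ α.op x = a}

/-- `B` is `𝒜`-independent: `b ∉ 𝒜(B \ {b})` for all `b ∈ B`. -/
def IsIndep {A : Type*} (𝒜 : Set (Op A)) (B : Set A) : Prop :=
  ∀ b ∈ B, b ∉ hull 𝒜 (B \ {b})

/-- `B` is strongly `𝒜`-independent. -/
def IsStronglyIndep {A : Type*} (𝒜 : Set (Op A)) (B : Set A) : Prop :=
  B ∩ hull 𝒜 ∅ = ∅ ∧
  ∀ B₁ B₂ : Set A, B₁ ⊆ B → B₂ ⊆ B → hull 𝒜 B₁ ∩ hull 𝒜 B₂ = hull 𝒜 (B₁ ∩ B₂)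

/-- `B` is `𝒜`-free: every function `f : B → A` (encoded as a function on `A`
whose values off `B` are irrelevant) admits `f̄ : 𝒜(B) → A` (encoded likewise)
with `f̄(α(x)) = α(f ∘ x)` for all `α ∈ 𝒜` and `x ∈ B^{S_α}`. -/
def IsFree {A : Type*} (𝒜 : Set (Op A)) (B : Set A) : Prop :=
  ∀ f : A → A, ∃ g : A → A, ∀ α ∈ 𝒜, ∀ x : α.supp → A,
    (∀ i, x i ∈ B) → g (α.op x) = α.op (fun i => f (x i))

/-- `𝒜` is unital: it contains the identity operation `A^1 → A`. -/
def Unital {A : Type*} (𝒜 : Set (Op A)) : Prop :=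
  ∃ α ∈ 𝒜, ∃ h : α.supp = {0},
    ∀ x : α.supp → A, α.op x = x ⟨0, by simp [h]⟩

/-- `𝒜` is stable under substitutions. -/
def SubstStable {A : Type*} (𝒜 : Set (Op A)) : Prop :=
  ∀ α ∈ 𝒜, ∀ (E : Finset ℕ) (σ : α.supp → E),
    (⟨E, fun x => α.op (fun i => x (σ i))⟩ : Op A) ∈ 𝒜

/-- `𝒜` is `∅`-regular. -/
def EmptyRegular {A : Type*} (𝒜 : Set (Op A)) : Prop :=
  ∀ α ∈ 𝒜, (∀ x y : α.supp → A, α.op x = α.op y) →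
    ∃ β ∈ 𝒜, β.supp = ∅ ∧ ∀ (z : β.supp → A) (x : α.supp → A), β.op z = α.op x

/-- `𝒜` is stable under compositions. -/
def CompStable {A : Type*} (𝒜 : Set (Op A)) : Prop :=
  ∀ α ∈ 𝒜, ∀ (S : Finset ℕ) (β : α.supp → Op A),
    (∀ i, β i ∈ 𝒜) → ∀ hS : ∀ i, (β i).supp = S,
    (⟨S, fun x => α.op (fun i => (β i).op (fun j => x ⟨j.1, hS i ▸ j.2⟩))⟩ : Op A) ∈ 𝒜

/-- A clone is a unital, `∅`-regular, substitution- and composition-stable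
family of operations. -/
def IsClone {A : Type*} (𝒜 : Set (Op A)) : Prop :=
  Unital 𝒜 ∧ EmptyRegular 𝒜 ∧ SubstStable 𝒜 ∧ CompStable 𝒜

/-- Multiplication `x·y = min(x, y)` on the two-element set `{0, 1} = Fin 2`,
as an operation with support `{0, 1} ⊆ ω`. -/
def minOp : Op (Fin 2) :=
  ⟨{0, 1}, fun x => min (x ⟨0, by simp⟩) (x ⟨1, by simp⟩)⟩

/-- for `A = {0, 1}` with `𝒜 = {·}` (multiplication = min), the
whole set `A` is `𝒜`-independent (indeed every subset is a subalgebra), but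
`A` is not `𝒜`-free: the transposition `f` swapping `0` and `1` admits no
extension `f̄` with `f̄(x·y) = f(x)·f(y)`. -/
theorem two_element_multiplication_independent_not_free :
    IsIndep {minOp} (Set.univ : Set (Fin 2)) ∧
    (∀ B : Set (Fin 2), hull {minOp} B ⊆ B) ∧
    ¬ IsFree {minOp} (Set.univ : Set (Fin 2)) ∧
    (∀ g : Fin 2 → Fin 2,
      ∃ x y : Fin 2, g (min x y) ≠ min ((1 - ·) x) ((1 - ·) y)) := by
  have hsub : ∀ B : Set (Fin 2), hull {minOp} B ⊆ B := by
    intro B a ha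
    rcases ha with h | h
    · exact h
    · simp only [Set.mem_iUnion, Set.mem_setOf_eq, Set.mem_singleton_iff] at h
      obtain ⟨α, rfl, x, hx, rfl⟩ := h
      have he : minOp.op x = min (x ⟨0, by simp [minOp]⟩) (x ⟨1, by simp [minOp]⟩) := rfl
      rw [he]
      rcases min_choice (x ⟨0, by simp [minOp]⟩) (x ⟨1, by simp [minOp]⟩) with h | h <;>
        rw [h] <;> exact hx _
  refine ⟨?_, hsub, ?_, ?_⟩
  · intro b _ hb
    have := hsub _ hb
    simp at this
  · intro hfree
    obtain ⟨g, hg⟩ := hfree (fun a => 1 - a)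
    by_cases h0 : g 0 = 0
    · have := hg minOp rfl (fun _ => 0) (fun _ => trivial)
      rw [minOp] at this
      simp [h0] at this
    · have := hg minOp rfl (fun i => if (i : ℕ) = 0 then 0 else 1)
        (fun _ => trivial)
      rw [minOp] at this
      simp at this
      exact h0 this
  · intro g
    by_cases h0 : g 0 = 0
    · exact ⟨0, 0, by simp [h0]⟩
    · exact ⟨0, 1, by simpa using h0⟩
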